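/- Let K be a field of arbitrary characteristic and R = K[x_1,…,x_n]. For every r ≥ 1, the Euler operators satisfy the relation E_1 ∘ E_r = (r+1)·E_{r+1} + r·E_r as K-linear endomorphisms of R. -/

import Mathlib

/-!
Every Euler operator is diagonal in the monomial basis: `E_r (x^a) = binom(|a|, r) x^a`, since
`x^c ∂^{[c]} x^a = (∏ binom(a_i, c_i)) x^a` and the multivariate Vandermonde identity sums these
coefficients over `|c| = r` to `binom(|a|, r)`. The relation is then the integer identity
`d · binom(d, r) = (r + 1) · binom(d, r + 1) + r · binom(d, r)` with `d = |a|`.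
-/

/-- The divided-power partial derivative `∂_i^{[j]}` on `K[x_1,…,x_n]`, determined on
monomials by `∂_i^{[j]}(x^a) = binom(a_i, j) • x^{a - j·e_i}` (zero when `a_i < j`). -/
noncomputable def dpDeriv (K : Type*) [CommRing K] {n : ℕ} (i : Fin n) (j : ℕ) :
    MvPolynomial (Fin n) K →ₗ[K] MvPolynomial (Fin n) K :=
  (Finsupp.lsum K fun a : Fin n →₀ ℕ =>
    (((a i).choose j : K)) •
      (MvPolynomial.monomial (a - Finsupp.single i j) : K →ₗ[K] MvPolynomial (Fin n) K))
    ∘ₗ (AddMonoidAlgebra.coeffLinearEquiv K).toLinearMap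

/-- The `r`-th Euler operator `E_r = Σ_{i_1+⋯+i_n=r} x_1^{i_1}⋯x_n^{i_n} ∂_1^{[i_1]}⋯∂_n^{[i_n]}`
on `K[x_1,…,x_n]`. -/
noncomputable def eulerOp (K : Type*) [CommRing K] (n : ℕ) (r : ℕ) :
    MvPolynomial (Fin n) K →ₗ[K] MvPolynomial (Fin n) K :=
  ∑ c ∈ Finset.Nat.antidiagonalTuple n r,
    LinearMap.mulLeft K (MvPolynomial.monomial (Finsupp.equivFunOnFinite.symm c) (1 : K)) ∘ₗ
      ((List.finRange n).map fun i => dpDeriv K i (c i)).prod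

open MvPolynomial

theorem Finset.sum_piAntidiag_prod_choose {ι : Type*} [DecidableEq ι] (s : Finset ι)
    (a : ι → ℕ) (r : ℕ) :
    ∑ c ∈ s.piAntidiag r, ∏ i ∈ s, (a i).choose (c i) = (∑ i ∈ s, a i).choose r := by
  induction s using Finset.cons_induction generalizing r with
  | empty =>
    rcases Nat.eq_zero_or_pos r with rfl | hr
    · simp
    · simp [Finset.piAntidiag_empty_of_ne_zero hr.ne', Nat.choose_eq_zero_of_lt hr]
  | cons i t hi ih =>
    rw [Finset.piAntidiag_cons hi, Finset.sum_disjiUnion, Finset.sum_cons, Nat.add_choose_eq]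
    refine Finset.sum_congr rfl fun p _ => ?_
    rw [Finset.sum_map, ← ih p.2, Finset.mul_sum]
    refine Finset.sum_congr rfl fun g hg => ?_
    have hgi : g i = 0 := by_contra fun h => hi ((Finset.mem_piAntidiag.1 hg).2 i h)
    have hne : ∀ j ∈ t, j ≠ i := fun j hj h => hi (h ▸ hj)
    rw [Finset.prod_cons]
    congr 1
    · simp [hgi]
    · exact Finset.prod_congr rfl fun j hj => by simp [hne j hj]

theorem Nat.mul_choose_eq_succ_mul_choose_succ_add_mul_choose (d r : ℕ) :
    d * d.choose r = (r + 1) * d.choose (r + 1) + r * d.choose r := by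
  rw [mul_comm (r + 1), Nat.choose_succ_right_eq]
  rcases le_or_gt r d with h | h
  · obtain ⟨e, rfl⟩ := Nat.exists_eq_add_of_le' h
    rw [Nat.add_sub_cancel]
    ring
  · simp [Nat.choose_eq_zero_of_lt h]

section CommRing

variable (K : Type*) [CommRing K] {n : ℕ}

theorem dpDeriv_monomial (i : Fin n) (j : ℕ) (a : Fin n →₀ ℕ) (k : K) :
    dpDeriv K i j (monomial a k) = ((a i).choose j : K) • monomial (a - Finsupp.single i j) k :=
  Finsupp.lsum_single K _ a k

theorem list_prod_map_dpDeriv_monomial (c : Fin n → ℕ) {l : List (Fin n)} (hl : l.Nodup)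
    (a : Fin n →₀ ℕ) (k : K) :
    (l.map fun i => dpDeriv K i (c i)).prod (monomial a k) =
      ((∏ i ∈ l.toFinset, (a i).choose (c i) : ℕ) : K) •
        monomial (a - ∑ i ∈ l.toFinset, Finsupp.single i (c i)) k := by
  induction l with
  | nil => simp
  | cons i t ih =>
    obtain ⟨hi, ht⟩ := List.nodup_cons.1 hl
    have hit : i ∉ t.toFinset := by simpa using hi
    have hai : (a - ∑ j ∈ t.toFinset, Finsupp.single j (c j)) i = a i := by
      simp [Finsupp.single_apply, hit]
    rw [List.map_cons, List.prod_cons, Module.End.mul_apply, ih ht, map_smul, dpDeriv_monomial,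
      hai, List.toFinset_cons, Finset.prod_insert hit, Finset.sum_insert hit, smul_smul,
      Nat.cast_mul, mul_comm, tsub_tsub, add_comm]

theorem eulerOp_monomial (r : ℕ) (a : Fin n →₀ ℕ) (k : K) :
    eulerOp K n r (monomial a k) = ((∑ i, a i).choose r : K) • monomial a k := by
  have hterm : ∀ c : Fin n → ℕ,
      monomial (Finsupp.equivFunOnFinite.symm c) 1 *
          ((List.finRange n).map fun i => dpDeriv K i (c i)).prod (monomial a k) =
        ((∏ i, (a i).choose (c i) : ℕ) : K) • monomial a k := by
    intro c
    rw [list_prod_map_dpDeriv_monomial K c (List.nodup_finRange n), List.toFinset_finRange,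
      mul_smul_comm, monomial_mul, one_mul, ← Finsupp.equivFunOnFinite_symm_eq_sum]
    by_cases hle : Finsupp.equivFunOnFinite.symm c ≤ a
    · rw [add_tsub_cancel_of_le hle]
    · obtain ⟨i, hi⟩ : ∃ i, a i < c i := by
        simpa [Finsupp.le_def] using hle
      rw [Finset.prod_eq_zero (Finset.mem_univ i) (Nat.choose_eq_zero_of_lt hi)]
      simp
  simp only [eulerOp, LinearMap.sum_apply, LinearMap.comp_apply, LinearMap.mulLeft_apply, hterm]
  rw [← Finset.sum_smul, ← Nat.cast_sum, ← Finset.piAntidiag_univ_fin_eq_antidiagonalTuple,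
    Finset.sum_piAntidiag_prod_choose]

end CommRing

theorem eulerOp_one_comp_general (K : Type*) [Field K] (n : ℕ) (r : ℕ) :
    eulerOp K n 1 ∘ₗ eulerOp K n r =
      (((r + 1 : ℕ)) : K) • eulerOp K n (r + 1) + ((r : ℕ) : K) • eulerOp K n r := by
  refine MvPolynomial.linearMap_ext fun a => LinearMap.ext_ring ?_
  simp only [LinearMap.comp_apply, LinearMap.add_apply, LinearMap.smul_apply, map_smul,
    eulerOp_monomial, smul_smul, ← add_smul, Nat.choose_one_right]
  congr 1
  norm_cast
  rw [mul_comm, Nat.mul_choose_eq_succ_mul_choose_succ_add_mul_choose]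

/-- For every `r ≥ 1`, the Euler operators satisfy
`E_1 ∘ E_r = (r+1)·E_{r+1} + r·E_r` as `K`-linear endomorphisms of `K[x_1,…,x_n]`. -/
theorem eulerOp_one_comp (K : Type*) [Field K] (n : ℕ) (r : ℕ) (hr : 1 ≤ r) :
    eulerOp K n 1 ∘ₗ eulerOp K n r =
      (((r + 1 : ℕ)) : K) • eulerOp K n (r + 1) + ((r : ℕ) : K) • eulerOp K n r :=
  eulerOp_one_comp_general K n r
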